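/- arXiv:1007.0578 — 2 statements merged into one kernel-verified Lean document; each statement's English description precedes it below -/
import Mathlib

section
/- Every subgroup of the Klein bottle group is either trivial, infinite cyclic, isomorphic to ℤ × ℤ, or isomorphic to the Klein bottle group itself. In particular, every subgroup of the Klein bottle group contains an abelian subgroup of index at most 2 which is trivial, infinite cyclic, or isomorphic to ℤ × ℤ. -/
/-- The action of `ℤ` on `ℤ` in which the generator acts by negation
(written multiplicatively). -/
def kleinBottleAction : Multiplicative ℤ →* MulAut (Multiplicative ℤ) :=
  zpowersHom (MulAut (Multiplicative ℤ)) (MulEquiv.inv (Multiplicative ℤ))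

/-- The Klein bottle group `⟨a, b ∣ a b a⁻¹ = b⁻¹⟩`, realized as the semidirect
product `ℤ ⋊ ℤ` where the generator of the acting copy of `ℤ` acts on the normal
copy of `ℤ` by negation. -/
abbrev KleinBottleGroup : Type :=
  SemidirectProduct (Multiplicative ℤ) (Multiplicative ℤ) kleinBottleAction

/-!
A subgroup `H` of `ℤ ⋊ ℤ` meets the normal factor in a cyclic group `⟨c⟩` and projects onto a
cyclic group `⟨a⟩`. If one of the two is trivial, `H` embeds into the other, so it is trivial or
infinite cyclic. Otherwise, for `h ∈ H` lying over `a`, every element of `H` is uniquely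
`c ^ s * h ^ t`, and `h` conjugates `c` to `c` or `c⁻¹` according to the parity of `a`; thus `H` is
`ℤ ⋊ ℤ` with the trivial action, i.e. `ℤ²`, or with the action by negation, i.e. `π₁(K)`.
The preimage of `2ℤ` is such a copy of `ℤ²` of index `2` in `π₁(K)`; pulled back along these
isomorphisms it gives the abelian subgroup of index at most `2` in every case.
-/

open Subgroup SemidirectProduct Multiplicative

theorem Multiplicative.int_subgroup_eq_bot_or_eq_zpowers (S : Subgroup (Multiplicative ℤ)) :
    S = ⊥ ∨ ∃ c ≠ 1, S = zpowers c := by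
  obtain ⟨c, rfl⟩ := (S.isCyclic_iff_exists_zpowers_eq_top).mp inferInstance
  by_cases hc : c = 1
  · simp [hc]
  · exact Or.inr ⟨c, hc, rfl⟩

theorem Subgroup.nonempty_zpowers_mulEquiv_mint {G : Type*} [Group G] {g : G}
    (hg : ¬IsOfFinOrder g) : Nonempty (zpowers g ≃* Multiplicative ℤ) :=
  ⟨(MonoidHom.ofInjective (f := zpowersHom G g)
    ((injective_zpow_iff_not_isOfFinOrder.mpr hg).comp toAdd.injective)).symm⟩

theorem Multiplicative.int_nonempty_mulEquiv_of_ne_bot {S : Subgroup (Multiplicative ℤ)}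
    (hS : S ≠ ⊥) : Nonempty (S ≃* Multiplicative ℤ) := by
  obtain ⟨c, hc, rfl⟩ := (int_subgroup_eq_bot_or_eq_zpowers S).resolve_left hS
  exact nonempty_zpowers_mulEquiv_mint (not_isOfFinOrder_of_isMulTorsionFree hc)

theorem Multiplicative.int_map_eq_zpow {F : Type*}
    [FunLike F (Multiplicative ℤ) (Multiplicative ℤ)]
    [MonoidHomClass F (Multiplicative ℤ) (Multiplicative ℤ)] (σ : F) (c : Multiplicative ℤ) :
    σ c = c ^ toAdd (σ (ofAdd 1)) := by
  have hσ := MonoidHom.apply_mint _ (σ : Multiplicative ℤ →* Multiplicative ℤ) c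
  rw [MonoidHom.coe_coe] at hσ
  rw [hσ]
  apply toAdd.injective
  simp [mul_comm]

theorem zpowersHom_one (α : Type*) [Group α] : zpowersHom α 1 = 1 :=
  MonoidHom.ext_mint (by simp)

theorem MulEquiv.isMulCommutative {G K : Type*} [Mul G] [Mul K] [IsMulCommutative K]
    (e : G ≃* K) : IsMulCommutative G :=
  ⟨⟨fun x y ↦ e.injective (by rw [map_mul, map_mul, IsMulCommutative.is_comm.comm])⟩⟩

namespace SemidirectProduct

theorem mul_inl_mul_inv {N G : Type*} [CommGroup N] [Group G] {φ : G →* MulAut N}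
    (k : N ⋊[φ] G) (n : N) : k * inl n * k⁻¹ = inl (φ k.right n) := by
  ext <;> simp [mul_comm]

variable {N G : Type*} [Group N] [Group G] {φ : G →* MulAut N} {H : Subgroup (N ⋊[φ] G)}

theorem map_inl_comap_inl (H : Subgroup (N ⋊[φ] G)) :
    (H.comap inl).map inl = rightHom.ker ⊓ H := by
  rw [map_comap_eq, range_inl_eq_ker_rightHom]

theorem eq_map_inl_comap_inl (hH : H.map rightHom = ⊥) : H = (H.comap inl).map inl := by
  rw [map_inl_comap_inl, right_eq_inf]
  exact (Subgroup.map_eq_bot_iff H).1 hH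

theorem nonempty_mulEquiv_map_rightHom (hH : H.comap inl = ⊥) :
    Nonempty (H ≃* H.map rightHom) := by
  have hinj : Function.Injective (rightHom.domRestrict H) := by
    rw [← MonoidHom.ker_eq_bot_iff, MonoidHom.ker_domRestrict, subgroupOf_eq_bot,
      disjoint_iff, ← map_inl_comap_inl, hH, Subgroup.map_bot]
  exact ⟨(MonoidHom.ofInjective hinj).trans
    (MulEquiv.subgroupCongr (MonoidHom.domRestrict_range _ _))⟩

end SemidirectProduct

theorem kleinBottleAction_ofAdd_two : kleinBottleAction (ofAdd 2) = 1 := by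
  ext; simp [kleinBottleAction, pow_two, MulAut.mul_apply]

theorem kleinBottleAction_eq_one_or_eq_inv (r : Multiplicative ℤ) :
    kleinBottleAction r = 1 ∨ kleinBottleAction r = MulEquiv.inv (Multiplicative ℤ) := by
  have hsq : MulEquiv.inv (Multiplicative ℤ) ^ (2 : ℤ) = 1 := kleinBottleAction_ofAdd_two
  rcases Int.even_or_odd' (toAdd r) with ⟨m, hm | hm⟩
  · left
    simp [kleinBottleAction, hm, zpow_mul, hsq]
  · right
    simp [kleinBottleAction, hm, zpow_add, zpow_mul, hsq]

namespace KleinBottleGroup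

/-- Conjugation by `h` acts on `inl c` through `kleinBottleAction (rightHom h)`, hence the action
on the source. -/
def liftPow (c : Multiplicative ℤ) (h : KleinBottleGroup) :
    Multiplicative ℤ ⋊[zpowersHom _ (kleinBottleAction (rightHom h))] Multiplicative ℤ →*
      KleinBottleGroup :=
  lift (zpowersHom _ (inl c)) (zpowersHom _ h) fun r ↦ MonoidHom.ext_mint <| by
    have hπ : (h ^ toAdd r).right = h.right ^ toAdd r := map_zpow rightHom h _
    simp [mul_inl_mul_inv, ← map_zpow, hπ, int_map_eq_zpow _ c]

theorem liftPow_apply (c : Multiplicative ℤ) (h : KleinBottleGroup) (p) :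
    liftPow c h p = inl c ^ toAdd p.left * h ^ toAdd p.right := rfl

theorem liftPow_injective {c : Multiplicative ℤ} {h : KleinBottleGroup} (hc : c ≠ 1)
    (hh : rightHom h ≠ 1) : Function.Injective (liftPow c h) := by
  rw [← MonoidHom.ker_eq_bot_iff, eq_bot_iff]
  intro p hp
  rw [MonoidHom.mem_ker, liftPow_apply] at hp
  have ht : toAdd p.right = 0 := by
    have hπ := congrArg rightHom hp
    rwa [map_mul, map_zpow, map_zpow, rightHom_inl, one_zpow, one_mul, map_one,
      IsMulTorsionFree.zpow_eq_one_iff_right hh] at hπ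
  have hs : toAdd p.left = 0 := by
    rwa [ht, zpow_zero, mul_one, ← map_zpow, map_eq_one_iff _ inl_injective,
      IsMulTorsionFree.zpow_eq_one_iff_right hc] at hp
  exact Subgroup.mem_bot.mpr (SemidirectProduct.ext hs ht)

theorem range_liftPow {H : Subgroup KleinBottleGroup} {c : Multiplicative ℤ}
    {h : KleinBottleGroup} (hc : H.comap inl = zpowers c) (hh : h ∈ H)
    (hπ : H.map rightHom = zpowers (rightHom h)) : (liftPow c h).range = H := by
  have hcH : inl c ∈ H := by
    rw [← mem_comap, hc]
    exact mem_zpowers c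
  refine le_antisymm ?_ fun x hx ↦ ?_
  · rintro _ ⟨p, rfl⟩
    exact mul_mem (zpow_mem hcH _) (zpow_mem hh _)
  obtain ⟨t, ht⟩ := mem_zpowers_iff.mp (hπ ▸ mem_map_of_mem rightHom hx)
  have hy : x * (h ^ t)⁻¹ ∈ (H.comap inl).map inl := by
    rw [map_inl_comap_inl]
    refine mem_inf.mpr ⟨?_, mul_mem hx (inv_mem (zpow_mem hh t))⟩
    rw [MonoidHom.mem_ker, map_mul, map_inv, map_zpow, ht, mul_inv_cancel]
  obtain ⟨d, hd, hdx⟩ := hy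
  obtain ⟨s, rfl⟩ := mem_zpowers_iff.mp (hc ▸ hd)
  refine ⟨⟨ofAdd s, ofAdd t⟩, ?_⟩
  rw [liftPow_apply, toAdd_ofAdd, toAdd_ofAdd, ← map_zpow, hdx, inv_mul_cancel_right]

theorem nonempty_mulEquiv_semidirectProduct {H : Subgroup KleinBottleGroup}
    {c a : Multiplicative ℤ} (hc : H.comap inl = zpowers c) (hc1 : c ≠ 1)
    (ha : H.map rightHom = zpowers a) (ha1 : a ≠ 1) :
    Nonempty (H ≃* Multiplicative ℤ ⋊[zpowersHom _ (kleinBottleAction a)] Multiplicative ℤ) := by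
  obtain ⟨h, hh, rfl⟩ : a ∈ H.map rightHom := ha ▸ mem_zpowers a
  exact ⟨(MulEquiv.subgroupCongr (range_liftPow hc hh ha).symm).trans
    (MonoidHom.ofInjective (liftPow_injective hc1 ha1)).symm⟩

theorem subgroup_classification (H : Subgroup KleinBottleGroup) :
    H = ⊥ ∨ Nonempty (H ≃* Multiplicative ℤ) ∨
      Nonempty (H ≃* Multiplicative ℤ × Multiplicative ℤ) ∨
      Nonempty (H ≃* KleinBottleGroup) := by
  rcases int_subgroup_eq_bot_or_eq_zpowers (H.comap inl) with hN | ⟨c, hc1, hc⟩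
  · obtain ⟨e⟩ := nonempty_mulEquiv_map_rightHom hN
    by_cases hQ : H.map rightHom = ⊥
    · left
      rw [eq_map_inl_comap_inl hQ, hN, Subgroup.map_bot]
    · obtain ⟨e'⟩ := int_nonempty_mulEquiv_of_ne_bot hQ
      exact Or.inr (Or.inl ⟨e.trans e'⟩)
  rcases int_subgroup_eq_bot_or_eq_zpowers (H.map rightHom) with hQ | ⟨a, ha1, ha⟩
  · obtain ⟨e⟩ := int_nonempty_mulEquiv_of_ne_bot (hc ▸ zpowers_ne_bot.mpr hc1)
    have e' := (H.comap inl).equivMapOfInjective (inl : _ →* KleinBottleGroup) inl_injective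
    rw [← eq_map_inl_comap_inl hQ] at e'
    exact Or.inr (Or.inl ⟨e'.symm.trans e⟩)
  obtain ⟨e⟩ := nonempty_mulEquiv_semidirectProduct hc hc1 ha ha1
  rcases kleinBottleAction_eq_one_or_eq_inv a with h1 | hinv
  · rw [h1, zpowersHom_one] at e
    exact Or.inr (Or.inr (Or.inl ⟨e.trans mulEquivProd⟩))
  · rw [hinv] at e
    exact Or.inr (Or.inr (Or.inr ⟨e⟩))

end KleinBottleGroup

def HasFreeAbelianSubgroupOfIndexLeTwo (G : Type*) [Group G] : Prop :=
  ∃ A : Subgroup G, A.index ≤ 2 ∧ IsMulCommutative A ∧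
    (A = ⊥ ∨ Nonempty (A ≃* Multiplicative ℤ) ∨
      Nonempty (A ≃* Multiplicative ℤ × Multiplicative ℤ))

namespace HasFreeAbelianSubgroupOfIndexLeTwo

theorem of_mulEquiv {G K : Type*} [Group G] [Group K] (e : G ≃* K)
    (hK : HasFreeAbelianSubgroupOfIndexLeTwo K) : HasFreeAbelianSubgroupOfIndexLeTwo G := by
  obtain ⟨A, hA2, hAcomm, hA⟩ := hK
  let f : A.map (e.symm : K →* G) ≃* A := (e.symm.subgroupMap A).symm
  refine ⟨A.map (e.symm : K →* G), by rwa [index_map_equiv], f.isMulCommutative, ?_⟩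
  rw [map_eq_bot_iff_of_injective _ e.symm.injective]
  exact hA.imp_right (Or.imp (fun ⟨g⟩ ↦ ⟨f.trans g⟩) fun ⟨g⟩ ↦ ⟨f.trans g⟩)

theorem of_subsingleton (G : Type*) [Group G] [Subsingleton G] :
    HasFreeAbelianSubgroupOfIndexLeTwo G :=
  ⟨⊥, by simp, ⟨⟨fun _ _ ↦ Subsingleton.elim _ _⟩⟩, Or.inl rfl⟩

theorem mint : HasFreeAbelianSubgroupOfIndexLeTwo (Multiplicative ℤ) :=
  ⟨⊤, by simp, inferInstance, Or.inr (Or.inl ⟨topEquiv⟩)⟩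

theorem mint_prod : HasFreeAbelianSubgroupOfIndexLeTwo (Multiplicative ℤ × Multiplicative ℤ) :=
  ⟨⊤, by simp, inferInstance, Or.inr (Or.inr ⟨topEquiv⟩)⟩

theorem kleinBottleGroup : HasFreeAbelianSubgroupOfIndexLeTwo KleinBottleGroup := by
  set E := (zpowers (ofAdd 2 : Multiplicative ℤ)).comap (rightHom : KleinBottleGroup →* _)
  have hQ : E.map rightHom = zpowers (ofAdd 2) :=
    map_comap_eq_self_of_surjective rightHom_surjective _
  have hN : E.comap inl = zpowers (ofAdd 1) := by
    ext x
    simpa [E, mem_zpowers_iff] using ⟨toAdd x, toAdd.injective (by simp)⟩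
  obtain ⟨e⟩ := KleinBottleGroup.nonempty_mulEquiv_semidirectProduct hN (by decide) hQ (by decide)
  rw [kleinBottleAction_ofAdd_two, zpowersHom_one] at e
  refine ⟨E, ?_, (e.trans mulEquivProd).isMulCommutative, Or.inr (Or.inr ⟨e.trans mulEquivProd⟩)⟩
  rw [index_comap_of_surjective _ rightHom_surjective]
  exact (Int.index_zmultiples 2).le

end HasFreeAbelianSubgroupOfIndexLeTwo

theorem KleinBottleGroup.hasFreeAbelianSubgroupOfIndexLeTwo (H : Subgroup KleinBottleGroup) :
    HasFreeAbelianSubgroupOfIndexLeTwo H := by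
  rcases KleinBottleGroup.subgroup_classification H with rfl | ⟨⟨e⟩⟩ | ⟨⟨e⟩⟩ | ⟨⟨e⟩⟩
  · exact .of_subsingleton _
  · exact .of_mulEquiv e .mint
  · exact .of_mulEquiv e .mint_prod
  · exact .of_mulEquiv e .kleinBottleGroup

/-- Every subgroup of the Klein bottle group is trivial, infinite cyclic,
isomorphic to `ℤ × ℤ`, or isomorphic to the Klein bottle group itself.
In particular, every subgroup contains an abelian subgroup of index at most 2
which is trivial, infinite cyclic, or isomorphic to `ℤ × ℤ`. -/
theorem kleinBottleGroup_subgroup_classification :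
    (∀ H : Subgroup KleinBottleGroup,
      H = ⊥ ∨ Nonempty (H ≃* Multiplicative ℤ) ∨
        Nonempty (H ≃* Multiplicative ℤ × Multiplicative ℤ) ∨
        Nonempty (H ≃* KleinBottleGroup)) ∧
    (∀ H : Subgroup KleinBottleGroup, ∃ A : Subgroup H,
      A.index ≤ 2 ∧ IsMulCommutative A ∧
      (A = ⊥ ∨ Nonempty (A ≃* Multiplicative ℤ) ∨
        Nonempty (A ≃* Multiplicative ℤ × Multiplicative ℤ))) :=
  ⟨KleinBottleGroup.subgroup_classification, KleinBottleGroup.hasFreeAbelianSubgroupOfIndexLeTwo⟩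
end

section
/- Fix real numbers λ and x with −π/2 < x < π/2. Let f, g : ℝ → ℝ be differentiable with f′(t) = cos²x + sin²x · sin²(f(t)) and g′(t) = λ sin x · cos²(f(t)) for all t ∈ ℝ, and with f(0) = −π/2 and g(0) = 0. Then g(π / cos x) = λπ(tan x − tan(x/2)). -/
open Real

/-!
With `c = cos x` and `s = sin x`, the equation for `f` reads
`f′ = c² cos² f + sin² f = 1 − s² cos² f`. The second form gives `s g′ = l (1 − f′)`, hence
`g T = (l / s)(T − (f T − f 0))`. The first form is the squared radius of the point
`(c cos f, sin f)` of an ellipse, whose polar angle `θ` satisfies `dθ/df = c / (c² cos² f + sin² f)`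
(the law of areas). So `θ ∘ f` grows at the constant rate `c` and, starting from `−π/2`, reaches
`π/2` exactly at `T = π / c`, where therefore `f T = π/2`.
-/

theorem mul_cos_sq_add_sin_sq_pos {a : ℝ} (ha : 0 < a) (z : ℝ) :
    0 < a * cos z ^ 2 + sin z ^ 2 := by
  rcases (sq_nonneg (sin z)).lt_or_eq with hs | hs
  · nlinarith [sq_nonneg (cos z)]
  · nlinarith [sin_sq_add_cos_sq z]

theorem sub_eq_sub_of_hasDerivAt_eq {u v u' : ℝ → ℝ} (hu : ∀ t, HasDerivAt u (u' t) t)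
    (hv : ∀ t, HasDerivAt v (u' t) t) (a b : ℝ) : u b - u a = v b - v a := by
  have huv : ∀ t, HasDerivAt (u - v) 0 t := fun t => by simpa using (hu t).sub (hv t)
  have := is_const_of_deriv_eq_zero (fun t => (huv t).differentiableAt)
    (fun t => (huv t).deriv) b a
  simp only [Pi.sub_apply] at this
  linarith

theorem tan_half_eq_one_sub_cos_div_sin (x : ℝ) : tan (x / 2) = (1 - cos x) / sin x := by
  set y := x / 2
  rw [show x = 2 * y by ring, cos_two_mul, sin_two_mul, tan_eq_sin_div_cos]
  rcases eq_or_ne (sin y) 0 with hs | hs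
  · simp [hs]
  rcases eq_or_ne (cos y) 0 with hc | hc
  · simp [hc]
  field_simp
  linear_combination 2 * sin_sq_add_cos_sq y

theorem tan_sub_tan_half {x : ℝ} (hx : cos x ≠ 0) :
    tan x - tan (x / 2) = (1 / cos x - 1) / sin x := by
  rw [tan_half_eq_one_sub_cos_div_sin, tan_eq_sin_div_cos]
  rcases eq_or_ne (sin x) 0 with hs | hs
  · simp [hs]
  field_simp
  linear_combination sin_sq_add_cos_sq x

/-- The polar angle of the point `(c cos z, sin z)`, continuous in `z`: the `arctan` term is the
angle from `(cos z, sin z)` to that point (cross product over the positive dot product). -/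
noncomputable def ellipseAngle (c z : ℝ) : ℝ :=
  z + arctan ((1 - c) * sin z * cos z / (c * cos z ^ 2 + sin z ^ 2))

theorem ellipseAngle_of_cos_eq_zero (c : ℝ) {z : ℝ} (hz : cos z = 0) :
    ellipseAngle c z = z := by
  simp [ellipseAngle, hz]

theorem hasDerivAt_ellipseAngle {c : ℝ} (hc : 0 < c) (z : ℝ) :
    HasDerivAt (ellipseAngle c) (c / (c ^ 2 * cos z ^ 2 + sin z ^ 2)) z := by
  have hE := mul_cos_sq_add_sin_sq_pos hc z
  have hD := mul_cos_sq_add_sin_sq_pos (pow_pos hc 2) z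
  have hN : HasDerivAt (fun z => (1 - c) * sin z * cos z) ((1 - c) * (cos z ^ 2 - sin z ^ 2)) z :=
    (((hasDerivAt_sin z).const_mul (1 - c)).mul (hasDerivAt_cos z)).congr_deriv (by ring)
  have hE' : HasDerivAt (fun z => c * cos z ^ 2 + sin z ^ 2) (2 * (1 - c) * sin z * cos z) z :=
    ((((hasDerivAt_cos z).pow 2).const_mul c).add ((hasDerivAt_sin z).pow 2)).congr_deriv
      (by ring)
  have hsum : (c * cos z ^ 2 + sin z ^ 2) ^ 2 + ((1 - c) * sin z * cos z) ^ 2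
      = c ^ 2 * cos z ^ 2 + sin z ^ 2 := by
    linear_combination (c ^ 2 * cos z ^ 2 + sin z ^ 2) * sin_sq_add_cos_sq z
  refine ((hasDerivAt_id z).add ((hN.div hE' hE.ne').arctan)).congr_deriv ?_
  simp only [Pi.div_apply]
  field_simp
  linear_combination (c ^ 2 * cos z ^ 2 + sin z ^ 2 - c) * hsum
    + (c ^ 2 * cos z ^ 2 + sin z ^ 2) * (c + (1 - c) * (c * cos z ^ 2 - sin z ^ 2))
      * sin_sq_add_cos_sq z

theorem ellipseAngle_strictMono {c : ℝ} (hc : 0 < c) : StrictMono (ellipseAngle c) :=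
  strictMono_of_hasDerivAt_pos (hasDerivAt_ellipseAngle hc) fun z =>
    div_pos hc (mul_cos_sq_add_sin_sq_pos (pow_pos hc 2) z)

theorem ellipseAngle_comp_sub {c : ℝ} (hc : 0 < c) {f : ℝ → ℝ}
    (hf : ∀ t, HasDerivAt f (c ^ 2 * cos (f t) ^ 2 + sin (f t) ^ 2) t) (a b : ℝ) :
    ellipseAngle c (f b) - ellipseAngle c (f a) = c * b - c * a := by
  refine sub_eq_sub_of_hasDerivAt_eq (u := fun t => ellipseAngle c (f t)) (u' := fun _ => c)
    (fun t => ?_) (fun t => by simpa using (hasDerivAt_id t).const_mul c) a b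
  refine ((hasDerivAt_ellipseAngle hc (f t)).comp t (hf t)).congr_deriv ?_
  field_simp [(mul_cos_sq_add_sin_sq_pos (pow_pos hc 2) (f t)).ne']

theorem apply_pi_div_eq_pi_div_two {c : ℝ} (hc : 0 < c) {f : ℝ → ℝ}
    (hf : ∀ t, HasDerivAt f (c ^ 2 * cos (f t) ^ 2 + sin (f t) ^ 2) t)
    (hf0 : f 0 = -(π / 2)) : f (π / c) = π / 2 := by
  apply (ellipseAngle_strictMono hc).injective
  have := ellipseAngle_comp_sub hc hf 0 (π / c)
  rw [hf0, ellipseAngle_of_cos_eq_zero c (z := -(π / 2)) (by rw [cos_neg, cos_pi_div_two]),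
    mul_div_cancel₀ _ hc.ne'] at this
  rw [ellipseAngle_of_cos_eq_zero c cos_pi_div_two]
  linarith

theorem sub_eq_of_hasDerivAt_cos_sq {l s : ℝ} {f g : ℝ → ℝ}
    (hf : ∀ t, HasDerivAt f (1 - s ^ 2 * cos (f t) ^ 2) t)
    (hg : ∀ t, HasDerivAt g (l * s * cos (f t) ^ 2) t) (a b : ℝ) :
    g b - g a = l / s * (b - a - (f b - f a)) := by
  have hv : ∀ t, HasDerivAt (fun t => l / s * (t - f t)) (l * s * cos (f t) ^ 2) t := by
    intro t
    refine (((hasDerivAt_id t).sub (hf t)).const_mul (l / s)).congr_deriv ?_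
    rcases eq_or_ne s 0 with rfl | hs
    · simp
    field_simp
    ring
  rw [sub_eq_sub_of_hasDerivAt_eq hg hv a b]
  ring

/-- For `−π/2 < x < π/2`, along the solution of `z′ = cos²x + sin²x · sin²z`,
`y′ = λ sin x · cos²z` starting at `z = −π/2`, `y = 0` at time `0`, the total
`y`-displacement at the crossing time `π / cos x` is `λπ(tan x − tan(x/2))`. -/
theorem crossing_displacement (l x : ℝ) (hx : x ∈ Set.Ioo (-(π/2)) (π/2))
    (f g : ℝ → ℝ)
    (hf : ∀ t : ℝ, HasDerivAt f (cos x ^ 2 + sin x ^ 2 * sin (f t) ^ 2) t)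
    (hg : ∀ t : ℝ, HasDerivAt g (l * sin x * cos (f t) ^ 2) t)
    (hf0 : f 0 = -(π/2)) (hg0 : g 0 = 0) :
    g (π / cos x) = l * π * (tan x - tan (x/2)) := by
  have hc : 0 < cos x := cos_pos_of_mem_Ioo hx
  have hf_radius : ∀ t, HasDerivAt f (cos x ^ 2 * cos (f t) ^ 2 + sin (f t) ^ 2) t := fun t => by
    convert hf t using 1
    linear_combination cos x ^ 2 * sin_sq_add_cos_sq (f t) - sin (f t) ^ 2 * sin_sq_add_cos_sq x
  have hf_cos : ∀ t, HasDerivAt f (1 - sin x ^ 2 * cos (f t) ^ 2) t := fun t => by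
    convert hf t using 1
    linear_combination -sin_sq_add_cos_sq x - sin x ^ 2 * sin_sq_add_cos_sq (f t)
  have hgT := sub_eq_of_hasDerivAt_cos_sq hf_cos hg 0 (π / cos x)
  rw [apply_pi_div_eq_pi_div_two hc hf_radius hf0, hf0, hg0] at hgT
  rw [tan_sub_tan_half hc.ne']
  linear_combination hgT
end
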